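/- arXiv:1611.01349 — 7 statements merged into one kernel-verified Lean document; each statement's English description precedes it below -/
import Mathlib

section
/- For natural numbers k ≤ l with l ≡ k (mod 2), ∫_{−π}^{π} cos(kx)·(cos x)^l dx = (2π/2^{l−k})·C(l−k, (l−k)/2)·∏_{i=0}^{k−1} (l−i)/(l+k−2i). -/
/-!
Expanding `cos x = (e^{ix} + e^{-ix}) / 2` binomially, `e^{ikx} cos^l x` is a combination of
the characters `e^{i(k + 2j - l)x}`, and only the constant one, `j = (l - k) / 2`, survives
integration over a period. Taking real parts, the integral is `2π C(l, (l - k)/2) / 2^l`; the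
product form follows by induction on `k` from `C(n, m) (n + 1) = C(n + 1, m) (n + 1 - m)`.
-/

open Real Finset

open Complex in
theorem integral_exp_int_mul_I (n : ℤ) :
    ∫ x in (-π)..π, exp (n * I * x) = if n = 0 then 2 * (π : ℂ) else 0 := by
  split_ifs with hn
  · simp [hn]
    ring
  · have hc : (n : ℂ) * I ≠ 0 := by simp [hn]
    have hper : exp (n * I * π) = exp (n * I * ↑(-π)) := by
      rw [show (n : ℂ) * I * π = n * I * ↑(-π) + n * (2 * π * I) by push_cast; ring,
        Complex.exp_add, exp_int_mul_two_pi_mul_I, mul_one]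
    rw [integral_exp_mul_complex hc, hper, sub_self, zero_div]

open Complex in
theorem Complex.cos_pow_eq_sum_exp (l : ℕ) (z : ℂ) :
    cos z ^ l =
      ∑ j ∈ range (l + 1), (l.choose j : ℂ) / 2 ^ l * exp ((2 * j - l : ℤ) * I * z) := by
  rw [cos, div_pow, add_pow, sum_div]
  refine sum_congr rfl fun j hj ↦ ?_
  have hjl : j ≤ l := Nat.lt_succ_iff.mp (mem_range.mp hj)
  rw [← exp_nat_mul, ← exp_nat_mul, ← Complex.exp_add]
  push_cast [hjl]
  ring_nf

open Complex in
theorem integral_exp_mul_cos_pow (k m : ℕ) :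
    ∫ x in (-π)..π, exp (k * I * x) * Complex.cos x ^ (2 * m + k) =
      2 * π * (2 * m + k).choose m / 2 ^ (2 * m + k) := by
  have hexpand (x : ℝ) : exp (k * I * x) * Complex.cos x ^ (2 * m + k) =
      ∑ j ∈ range (2 * m + k + 1), ((2 * m + k).choose j : ℂ) / 2 ^ (2 * m + k) *
        exp ((k + 2 * j - (2 * m + k : ℕ) : ℤ) * I * x) := by
    rw [cos_pow_eq_sum_exp, mul_sum]
    refine sum_congr rfl fun j _ ↦ ?_
    rw [mul_left_comm, ← Complex.exp_add]
    push_cast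
    ring_nf
  have hintegrable (n : ℤ) :
      IntervalIntegrable (fun x : ℝ ↦ exp (n * I * x)) MeasureTheory.volume (-π) π :=
    (by fun_prop : Continuous fun x : ℝ ↦ exp (n * I * x)).intervalIntegrable _ _
  have hconstant (j : ℕ) : (k + 2 * j - (2 * m + k : ℕ) : ℤ) = 0 ↔ j = m := by omega
  simp_rw [hexpand]
  rw [intervalIntegral.integral_finsetSum fun j _ ↦ (hintegrable _).const_mul _]
  simp_rw [intervalIntegral.integral_const_mul, integral_exp_int_mul_I, hconstant, mul_ite,
    mul_zero]
  rw [sum_ite_eq', if_pos (mem_range.mpr (by omega))]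
  ring

theorem integral_cos_mul_cos_pow_two_mul_add (k m : ℕ) :
    ∫ x in (-π)..π, Real.cos (k * x) * Real.cos x ^ (2 * m + k) =
      2 * π * (2 * m + k).choose m / 2 ^ (2 * m + k) := by
  have hintegrable : IntervalIntegrable
      (fun x : ℝ ↦ Complex.exp (k * Complex.I * x) * Complex.cos x ^ (2 * m + k))
      MeasureTheory.volume (-π) π :=
    (by fun_prop : Continuous _).intervalIntegrable _ _
  have h := congrArg Complex.reCLM (integral_exp_mul_cos_pow k m)
  rw [← Complex.reCLM.intervalIntegral_comp_comm hintegrable] at h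
  convert h using 1
  · refine intervalIntegral.integral_congr fun x _ ↦ ?_
    rw [Complex.reCLM_apply, ← Complex.ofReal_cos, ← Complex.ofReal_pow, Complex.re_mul_ofReal,
      show (k : ℂ) * Complex.I * x = (k * x : ℝ) * Complex.I by push_cast; ring,
      Complex.exp_ofReal_mul_I_re]
  · norm_cast

theorem choose_div_two_pow_eq_central_mul_prod (m k : ℕ) :
    ((2 * m + k).choose m : ℝ) / 2 ^ (2 * m + k) =
      (2 * m).choose m / 2 ^ (2 * m) *
        ∏ i ∈ range k, (((2 * m + k : ℕ) : ℝ) - i) / ((2 * m + k : ℕ) + k - 2 * i) := by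
  induction k with
  | zero => simp
  | succ k ih =>
    have hshift : ∏ i ∈ range k, (((2 * m + (k + 1) : ℕ) : ℝ) - (i + 1 : ℕ)) /
          ((2 * m + (k + 1) : ℕ) + (k + 1 : ℕ) - 2 * (i + 1 : ℕ)) =
        ∏ i ∈ range k, (((2 * m + k : ℕ) : ℝ) - i) / ((2 * m + k : ℕ) + k - 2 * i) :=
      prod_congr rfl fun i _ ↦ by push_cast; ring_nf
    have hstep : ((2 * m + k).choose m : ℝ) * (2 * m + k + 1) =
        (2 * m + k + 1).choose m * (m + k + 1) := by
      have h := Nat.choose_mul_succ_eq (2 * m + k) m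
      rw [show 2 * m + k + 1 - m = m + k + 1 by omega] at h
      exact_mod_cast h
    rw [prod_range_succ', hshift, ← mul_assoc, ← ih]
    push_cast
    rw [show 2 * (m : ℝ) + (k + 1) + (k + 1) - 2 * 0 = 2 * (m + k + 1) by ring, ← add_assoc,
      pow_succ]
    field_simp
    linear_combination -hstep

theorem integral_cos_mul_cos_pow (k l : ℕ) (hkl : k ≤ l) (hpar : l % 2 = k % 2) :
    ∫ x in (-π)..π, Real.cos (k * x) * (Real.cos x) ^ l =
      2 * π / 2 ^ (l - k) * ((l - k).choose ((l - k) / 2) : ℝ) *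
        ∏ i ∈ Finset.range k, (((l : ℝ) - i) / ((l : ℝ) + k - 2 * i)) := by
  obtain ⟨m, rfl⟩ : ∃ m, l = 2 * m + k := ⟨(l - k) / 2, by omega⟩
  rw [integral_cos_mul_cos_pow_two_mul_add, mul_div_assoc,
    choose_div_two_pow_eq_central_mul_prod, Nat.add_sub_cancel, Nat.mul_div_cancel_left m two_pos]
  ring
end

section
/- For every natural number n ≥ 1 and every k ∈ {1,…,n} with k ≠ (n+1)/2, one has (2/(n+1))² · ∑_{i=1}^{n} sin⁴(k i π/(n+1)) = 3/(2(n+1)). -/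
/-!
The `i = 0` term vanishes, so the sum may be taken over the full period `0 ≤ i ≤ n`. Expanding
`sin⁴ x = 3/8 - cos (2x)/2 + cos (4x)/8` turns it into `3(n+1)/8` plus two sums of
`cos (2π m i/(n+1))` with `m = k` and `m = 2k`. Such a sum is the real part of a geometric sum
of an `(n+1)`-th root of unity, which vanishes unless `n + 1 ∣ m`; for `1 ≤ k ≤ n` this happens
only when `2k = n + 1`.
-/

open Real Finset

theorem sum_range_cos_two_pi_mul_div_eq_zero {N m : ℕ} (h : ¬ N ∣ m) :
    ∑ i ∈ range N, cos (2 * π * m * i / N) = 0 := by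
  rcases eq_or_ne N 0 with rfl | hN
  · simp
  have hζ := Complex.isPrimitiveRoot_exp N hN
  set z := Complex.exp (2 * π * Complex.I / N) ^ m
  have hz_ne_one : z ≠ 1 := fun hz => h ((hζ.pow_eq_one_iff_dvd m).mp hz)
  have hz_pow : z ^ N = 1 := by rw [pow_right_comm, hζ.pow_eq_one, one_pow]
  have hgeom : ∑ i ∈ range N, z ^ i = 0 := by
    rw [geom_sum_eq hz_ne_one, hz_pow, sub_self, zero_div]
  have hz_pow_re (i : ℕ) : (z ^ i).re = cos (2 * π * m * i / N) := by
    rw [← pow_mul, ← Complex.exp_nat_mul, ← Complex.exp_ofReal_mul_I_re]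
    congr 2
    push_cast
    ring
  simpa only [Complex.re_sum, hz_pow_re, Complex.zero_re] using congrArg Complex.re hgeom

theorem sin_pow_four_eq (x : ℝ) : sin x ^ 4 = 3 / 8 - cos (2 * x) / 2 + cos (4 * x) / 8 := by
  rw [show 4 * x = 2 * (2 * x) by ring, cos_two_mul (2 * x), cos_two_mul x]
  linear_combination (sin x ^ 2 + 1 - cos x ^ 2) * sin_sq_add_cos_sq x

theorem sum_range_sin_pow_four {N k : ℕ} (h : ¬ N ∣ 2 * k) :
    ∑ i ∈ range N, sin (k * i * π / N) ^ 4 = 3 * N / 8 := by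
  have hk : ¬ N ∣ k := fun hk => h (hk.mul_left 2)
  have hcos₁ := sum_range_cos_two_pi_mul_div_eq_zero hk
  have hcos₂ := sum_range_cos_two_pi_mul_div_eq_zero h
  have hexpand (i : ℕ) : sin (k * i * π / N) ^ 4 =
      3 / 8 - cos (2 * π * k * i / N) / 2 + cos (2 * π * ↑(2 * k) * i / N) / 8 := by
    rw [sin_pow_four_eq]
    push_cast
    ring_nf
  simp only [hexpand, sum_add_distrib, sum_sub_distrib, ← sum_div, hcos₁, hcos₂, sum_const,
    card_range, nsmul_eq_mul]
  ring

theorem sum_sin_fourth_general (n k : ℕ) (hk1 : 1 ≤ k) (hkn : k ≤ n)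
    (hk : 2 * k ≠ n + 1) :
    (2 / ((n : ℝ) + 1)) ^ 2 * ∑ i ∈ Finset.Icc 1 n, Real.sin (k * i * π / (n + 1)) ^ 4 =
      3 / (2 * ((n : ℝ) + 1)) := by
  have hdvd : ¬ n + 1 ∣ 2 * k := fun h => hk (Nat.eq_of_dvd_of_lt_two_mul (by omega) h (by omega))
  have hsum := sum_range_sin_pow_four hdvd
  rw [Nat.range_succ_eq_Icc_zero, ← insert_Icc_add_one_left_eq_Icc n.zero_le,
    sum_insert (by simp)] at hsum
  push_cast at hsum
  rw [mul_zero, zero_mul, zero_div, sin_zero, zero_pow four_ne_zero, zero_add] at hsum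
  rw [hsum]
  field_simp
  ring

theorem sum_sin_fourth (n k : ℕ) (hn : 1 ≤ n) (hk1 : 1 ≤ k) (hkn : k ≤ n)
    (hk : 2 * k ≠ n + 1) :
    (2 / ((n : ℝ) + 1)) ^ 2 * ∑ i ∈ Finset.Icc 1 n, Real.sin (k * i * π / (n + 1)) ^ 4 =
      3 / (2 * ((n : ℝ) + 1)) :=
  sum_sin_fourth_general n k hk1 hkn hk
end

section
/- Let n ≥ 1 and let k, l ∈ {1,…,n} satisfy k ≠ l and k + l ≠ n + 1. Then (2/(n+1))² · ∑_{i=1}^{n} sin²(k i π/(n+1)) · sin²(l i π/(n+1)) = 1/(n+1). -/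
open Real Finset

/-!
Expanding `sin² x · sin² y` into `1, cos 2x, cos 2y, cos 2(x+y), cos 2(x-y)` reduces the sum to
the sums `∑_{i=1}^n cos (2π m i/(n+1))` for `m = k, l, k+l, k-l`. None of these `m` is divisible
by `n+1`, so each full period sum `∑_{i=0}^n` vanishes and each of the four sums is `-1`. The total
is `n/4 + 1/4 + 1/4 - 1/8 - 1/8 = (n+1)/4`.
-/

theorem sum_range_cos_two_pi_mul_div_mul_eq_zero {N : ℕ} {m : ℤ} (h : ¬ (N : ℤ) ∣ m) :
    ∑ i ∈ range N, cos (2 * π * m / N * i) = 0 := by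
  rcases Nat.eq_zero_or_pos N with rfl | hN
  · simp
  have hN' : (N : ℝ) ≠ 0 := by positivity
  have hsin : sin (2 * π * m / N / 2) ≠ 0 := by
    rw [Ne, sin_eq_zero_iff]
    rintro ⟨j, hj⟩
    refine h ⟨j, ?_⟩
    have : (m : ℝ) = N * j := by
      field_simp at hj
      linarith [pi_pos]
    exact_mod_cast this
  -- `sin (a/2) * ∑ cos (a i) = sin (N a/2) * cos (...)`, and here `sin (N a/2) = sin (m π) = 0`
  have key := sin_mul_sum_cos N (2 * π * m / N) 0
  simp only [add_zero] at key
  rw [show (N : ℝ) * (2 * π * m / N) / 2 = m * π by field_simp, sin_int_mul_pi, zero_mul] at key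
  exact (mul_eq_zero.mp key).resolve_left hsin

theorem sum_Icc_cos_two_pi_mul_div_mul_eq_neg_one {n : ℕ} {m : ℤ} (h : ¬ ((n : ℤ) + 1) ∣ m) :
    ∑ i ∈ Icc 1 n, cos (2 * π * m / (n + 1) * i) = -1 := by
  have hrange :=
    sum_range_cos_two_pi_mul_div_mul_eq_zero (N := n + 1) (m := m) (by exact_mod_cast h)
  rw [sum_range_succ'] at hrange
  rw [← Finset.Ico_add_one_right_eq_Icc, sum_Ico_eq_sum_range]
  push_cast at hrange ⊢
  simp only [mul_zero, cos_zero] at hrange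
  simp only [add_comm (1 : ℝ)]
  linarith

theorem sin_sq_mul_sin_sq (x y : ℝ) :
    sin x ^ 2 * sin y ^ 2 =
      1 / 4 - cos (2 * x) / 4 - cos (2 * y) / 4 + cos (2 * (x + y)) / 8 + cos (2 * (x - y)) / 8 := by
  rw [mul_add, mul_sub, cos_add, cos_sub, cos_two_mul, cos_two_mul, sin_two_mul, sin_two_mul,
    sin_sq, sin_sq]
  ring

theorem sum_sin_sq_mul_sin_sq_general (n k l : ℕ)
    (hk1 : 1 ≤ k) (hkn : k ≤ n) (hl1 : 1 ≤ l) (hln : l ≤ n)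
    (hkl : k ≠ l) (hsum : k + l ≠ n + 1) :
    (2 / ((n : ℝ) + 1)) ^ 2 *
        ∑ i ∈ Finset.Icc 1 n,
          Real.sin (k * i * π / (n + 1)) ^ 2 * Real.sin (l * i * π / (n + 1)) ^ 2 =
      1 / ((n : ℝ) + 1) := by
  have not_dvd : ∀ m : ℤ, m ≠ 0 → m.natAbs < n + 1 → ¬ ((n : ℤ) + 1) ∣ m :=
    fun m hm hlt hdvd => hm (Int.eq_zero_of_dvd_of_natAbs_lt_natAbs hdvd (by omega))
  have hk := sum_Icc_cos_two_pi_mul_div_mul_eq_neg_one (not_dvd k (by omega) (by omega))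
  have hl := sum_Icc_cos_two_pi_mul_div_mul_eq_neg_one (not_dvd l (by omega) (by omega))
  have hadd := sum_Icc_cos_two_pi_mul_div_mul_eq_neg_one (m := k + l)
    (dvd_sub_self_right.not.mp (not_dvd _ (by omega) (by omega)))
  have hsub := sum_Icc_cos_two_pi_mul_div_mul_eq_neg_one (m := k - l)
    (not_dvd _ (by omega) (by omega))
  push_cast at hk hl hadd hsub
  have hterm : ∀ i ∈ Icc 1 n,
      sin (k * i * π / (n + 1)) ^ 2 * sin (l * i * π / (n + 1)) ^ 2 =
        1 / 4 - cos (2 * π * k / (n + 1) * i) / 4 - cos (2 * π * l / (n + 1) * i) / 4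
          + cos (2 * π * (k + l) / (n + 1) * i) / 8 + cos (2 * π * (k - l) / (n + 1) * i) / 8 := by
    intro i _
    rw [sin_sq_mul_sin_sq]
    ring_nf
  rw [sum_congr rfl hterm]
  simp only [sum_add_distrib, sum_sub_distrib, ← sum_div, sum_const, Nat.card_Icc,
    nsmul_eq_mul, Nat.add_sub_cancel, hk, hl, hadd, hsub]
  field_simp
  ring

theorem sum_sin_sq_mul_sin_sq (n k l : ℕ) (hn : 1 ≤ n)
    (hk1 : 1 ≤ k) (hkn : k ≤ n) (hl1 : 1 ≤ l) (hln : l ≤ n)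
    (hkl : k ≠ l) (hsum : k + l ≠ n + 1) :
    (2 / ((n : ℝ) + 1)) ^ 2 *
        ∑ i ∈ Finset.Icc 1 n,
          Real.sin (k * i * π / (n + 1)) ^ 2 * Real.sin (l * i * π / (n + 1)) ^ 2 =
      1 / ((n : ℝ) + 1) :=
  sum_sin_sq_mul_sin_sq_general n k l hk1 hkn hl1 hln hkl hsum
end

section
/- For every integer k and real t ≥ 0, define ρ_k(t) = (1/(4π²)) ∫_{−π}^{π} ∫_{−π}^{π} cos(kx)·cos(ky)·exp(−(t/2)(cos x − cos y)²) dx dy. Then ρ_k(t) = ∑_{n=|k|}^{∞} ((−1)^{n+k}/8^n)·C(2n,n)·C(2n,n+k)·t^n/n!. -/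
/-!
Expanding the exponential turns the double integral into a power series in `t` whose `n`-th
coefficient is a multiple of `∫∫ cos (k x) cos (k y) (cos x - cos y) ^ (2 n)`. The binomial
theorem reduces this to the one-dimensional moments `∫ cos (k x) cos x ^ m = 2π w_m(k) / 2 ^ m`,
where `w_m(k) = walkCount m k` counts the `±1` walks of length `m` from `0` to `k`. By parity,
`(-1) ^ j w_j(k) = (-1) ^ k w_j(k)`, and what remains, `∑ C(m, j) w_j(k) w_{m-j}(k)`, counts
walks of length `m` on `ℤ²` with steps `±e₁, ±e₂` ending at `(k, k)`. Rotating the lattice by 45°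
splits such a walk into two independent `±1` walks, ending at `2k` and `0`, which gives
`w_{2n}(2k) w_{2n}(0) = C(2n, n + |k|) C(2n, n)`.
-/

open Real Finset

theorem intervalIntegral_tsum_eq_of_norm_le {E ι : Type*} [NormedAddCommGroup E] [NormedSpace ℝ E]
    [CompleteSpace E] [Countable ι] {a b : ℝ} {f : ι → ℝ → E} {C : ι → ℝ}
    (hf : ∀ i, Continuous (f i)) (hC : Summable C) (hfC : ∀ i x, ‖f i x‖ ≤ C i) :
    ∫ x in a..b, ∑' i, f i x = ∑' i, ∫ x in a..b, f i x := by
  refine (intervalIntegral.tsum_intervalIntegral_eq_of_summable_norm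
    (f := fun i => ⟨f i, hf i⟩) (hC.of_nonneg_of_le (fun _ => norm_nonneg _) fun i => ?_)).symm
  exact (ContinuousMap.norm_le _ ((norm_nonneg _).trans (hfC i a))).2 fun x => hfC i x

theorem mul_exp_eq_tsum (c u v : ℝ) :
    v * exp (c * u) = ∑' n : ℕ, c ^ n / n.factorial * (v * u ^ n) := by
  rw [exp_eq_exp_ℝ, NormedSpace.exp_eq_tsum_div, ← tsum_mul_left]
  congr 1 with n
  ring

theorem intervalIntegral_intervalIntegral_mul_exp_eq_tsum {a b a' b' c A M : ℝ}
    {f u : ℝ → ℝ → ℝ} (hf : Continuous (Function.uncurry f)) (hu : Continuous (Function.uncurry u))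
    (hfA : ∀ x y, |f x y| ≤ A) (huM : ∀ x y, |u x y| ≤ M) :
    ∫ x in a..b, ∫ y in a'..b', f x y * exp (c * u x y) =
      ∑' n : ℕ, c ^ n / n.factorial * ∫ x in a..b, ∫ y in a'..b', f x y * u x y ^ n := by
  have hterm : ∀ n x y, ‖c ^ n / n.factorial * (f x y * u x y ^ n)‖ ≤
      |c| ^ n / n.factorial * (A * M ^ n) := by
    intro n x y
    rw [norm_mul, norm_div, norm_pow, Real.norm_eq_abs, Real.norm_natCast, norm_mul, norm_pow,
      Real.norm_eq_abs, Real.norm_eq_abs]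
    have hA : 0 ≤ A := (abs_nonneg _).trans (hfA x y)
    gcongr
    exacts [hfA x y, huM x y]
  have hsum : Summable fun n : ℕ => |c| ^ n / n.factorial * (A * M ^ n) := by
    refine ((summable_pow_div_factorial (|c| * M)).mul_left A).congr fun n => ?_
    rw [mul_pow]
    ring
  have hinner : ∀ x, ∫ y in a'..b', f x y * exp (c * u x y) =
      ∑' n : ℕ, c ^ n / n.factorial * ∫ y in a'..b', f x y * u x y ^ n := by
    intro x
    simp_rw [mul_exp_eq_tsum, ← intervalIntegral.integral_const_mul]
    exact intervalIntegral_tsum_eq_of_norm_le (fun n => by fun_prop) hsum (hterm · x)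
  simp_rw [hinner, ← intervalIntegral.integral_const_mul]
  refine intervalIntegral_tsum_eq_of_norm_le (fun n => by fun_prop)
    (hsum.mul_right |b' - a'|) fun n x => ?_
  exact intervalIntegral.norm_integral_le_of_norm_le_const fun y _ => hterm n x y

def walkCount (m : ℕ) (k : ℤ) : ℕ :=
  if Even (m + k.natAbs) then m.choose ((m + k.natAbs) / 2) else 0

@[simp]
lemma walkCount_neg (m : ℕ) (k : ℤ) : walkCount m (-k) = walkCount m k := by
  simp [walkCount]

lemma walkCount_zero_left (k : ℤ) : walkCount 0 k = if k = 0 then 1 else 0 := by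
  rcases eq_or_ne k 0 with rfl | hk
  · simp [walkCount]
  · rw [walkCount, if_neg hk]
    split_ifs with h
    · exact Nat.choose_eq_zero_of_lt (by rw [Nat.even_iff] at h; omega)
    · rfl

lemma walkCount_succ_natCast (m a : ℕ) :
    walkCount (m + 1) a = walkCount m (a - 1) + walkCount m (a + 1) := by
  have hplus : ((a : ℤ) + 1).natAbs = a + 1 := by omega
  by_cases h : Even (m + 1 + a)
  · obtain ⟨i, hi⟩ := h
    have hminus : m.choose ((m + ((a : ℤ) - 1).natAbs) / 2) = m.choose (i - 1) := by
      rcases Nat.eq_zero_or_pos a with rfl | ha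
      · exact Nat.choose_symm_of_eq_add (by omega)
      · congr 1; omega
    have heven : Even (m + ((a : ℤ) - 1).natAbs) := by rw [Nat.even_iff]; omega
    simp only [walkCount, Int.natAbs_natCast, hplus, heven, hminus, if_true,
      show Even (m + (a + 1)) from ⟨i, by omega⟩, show Even (m + 1 + a) from ⟨i, by omega⟩]
    obtain ⟨j, rfl⟩ : ∃ j, i = j + 1 := ⟨i - 1, by omega⟩
    rw [show (m + 1 + a) / 2 = j + 1 by omega, show (m + (a + 1)) / 2 = j + 1 by omega,
      Nat.choose_succ_succ', Nat.add_sub_cancel]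
  · have hodd : ¬ Even (m + ((a : ℤ) - 1).natAbs) := by rw [Nat.even_iff] at h ⊢; omega
    simp only [walkCount, Int.natAbs_natCast, hplus, h, hodd, if_false,
      show ¬ Even (m + (a + 1)) by rwa [← add_assoc, add_right_comm]]

lemma walkCount_succ (m : ℕ) (k : ℤ) :
    walkCount (m + 1) k = walkCount m (k - 1) + walkCount m (k + 1) := by
  obtain ⟨a, rfl | rfl⟩ := Int.eq_nat_or_neg k
  · exact walkCount_succ_natCast m a
  · rw [walkCount_neg, walkCount_succ_natCast, add_comm, ← walkCount_neg m (a - 1),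
      ← walkCount_neg m (a + 1)]
    congr 2 <;> ring

lemma walkCount_of_not_even {m : ℕ} {k : ℤ} (h : ¬ Even (m + k.natAbs)) : walkCount m k = 0 :=
  if_neg h

lemma neg_one_pow_mul_walkCount {R : Type*} [Ring R] (m : ℕ) (k : ℤ) :
    (-1 : R) ^ m * walkCount m k = (-1) ^ k.natAbs * walkCount m k := by
  by_cases h : Even (m + k.natAbs)
  · rw [neg_one_pow_congr (Nat.even_add.1 h)]
  · simp [walkCount_of_not_even h]

lemma sum_antidiagonal_choose_mul_walkCount_mul_walkCount (m : ℕ) (p q : ℤ) :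
    ∑ ij ∈ antidiagonal m, m.choose ij.1 * (walkCount ij.1 p * walkCount ij.2 q) =
      walkCount m (p + q) * walkCount m (p - q) := by
  induction m generalizing p q with
  | zero =>
    simp only [Nat.antidiagonal_zero, sum_singleton, Nat.choose_self, one_mul, walkCount_zero_left]
    split_ifs <;> omega
  | succ m ih =>
    have hsplit := sum_antidiagonal_choose_succ_mul (R := ℕ)
      (fun i j => walkCount i p * walkCount j q) m
    simp only [Nat.cast_id] at hsplit
    have hsymm : ∀ ij ∈ antidiagonal m, m.choose ij.2 * (walkCount (ij.1 + 1) p * walkCount ij.2 q)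
        = m.choose ij.1 * (walkCount ij.1 (p - 1) * walkCount ij.2 q)
          + m.choose ij.1 * (walkCount ij.1 (p + 1) * walkCount ij.2 q) := by
      intro ij hij
      rw [Nat.choose_symm_of_eq_add (mem_antidiagonal.1 hij).symm, walkCount_succ]
      ring
    rw [hsplit, sum_congr rfl hsymm]
    simp only [walkCount_succ, mul_add, sum_add_distrib, ih]
    ring_nf

lemma walkCount_two_mul (n : ℕ) (k : ℤ) :
    walkCount (2 * n) (2 * k) = (2 * n).choose (n + k.natAbs) := by
  rw [walkCount, show (2 * k).natAbs = 2 * k.natAbs by omega, if_pos (by rw [Nat.even_iff]; omega)]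
  congr 1
  omega

lemma sum_antidiagonal_choose_mul_neg_one_pow_mul_walkCount_mul_walkCount {R : Type*} [CommRing R]
    (m : ℕ) (k : ℤ) :
    ∑ ij ∈ antidiagonal m, (m.choose ij.1 * (-1 : R) ^ ij.2) * walkCount ij.1 k * walkCount ij.2 k =
      (-1) ^ k.natAbs * walkCount m (2 * k) * walkCount m 0 := by
  have hsign : ∀ ij ∈ antidiagonal m,
      (m.choose ij.1 * (-1 : R) ^ ij.2) * walkCount ij.1 k * walkCount ij.2 k =
        (-1) ^ k.natAbs * ((m.choose ij.1 * (walkCount ij.1 k * walkCount ij.2 k) : ℕ) : R) := by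
    intro ij _
    push_cast
    linear_combination
      (m.choose ij.1 * walkCount ij.1 k : R) * neg_one_pow_mul_walkCount (R := R) ij.2 k
  rw [sum_congr rfl hsign, ← mul_sum, ← Nat.cast_sum,
    sum_antidiagonal_choose_mul_walkCount_mul_walkCount, two_mul, sub_self]
  push_cast
  ring

lemma integral_cos_intCast_mul (c : ℤ) :
    ∫ x in (-π)..π, cos (c * x) = if c = 0 then 2 * π else 0 := by
  rcases eq_or_ne c 0 with rfl | hc
  · simp [two_mul]
  · rw [if_neg hc, intervalIntegral.integral_comp_mul_left cos (Int.cast_ne_zero.2 hc),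
      integral_cos, mul_neg, sin_neg, sin_int_mul_pi]
    simp

lemma integral_cos_intCast_mul_mul_cos_pow (k : ℤ) (m : ℕ) :
    ∫ x in (-π)..π, cos (k * x) * cos x ^ m = 2 * π * walkCount m k / 2 ^ m := by
  induction m generalizing k with
  | zero =>
    simp only [pow_zero, mul_one, integral_cos_intCast_mul, walkCount_zero_left]
    split_ifs <;> simp
  | succ m ih =>
    have hprod : ∀ x : ℝ, cos (k * x) * cos x ^ (m + 1) =
        (cos (((k - 1 : ℤ) : ℝ) * x) * cos x ^ m +
          cos (((k + 1 : ℤ) : ℝ) * x) * cos x ^ m) / 2 := by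
      intro x
      push_cast
      rw [sub_mul, add_mul, one_mul, cos_sub, cos_add, pow_succ]
      ring
    simp_rw [hprod]
    rw [intervalIntegral.integral_div, intervalIntegral.integral_add
      ((by fun_prop : Continuous _).intervalIntegrable _ _)
      ((by fun_prop : Continuous _).intervalIntegrable _ _),
      ih, ih, walkCount_succ]
    push_cast
    ring

theorem integral_integral_cos_mul_cos_mul_cos_sub_cos_pow (k : ℤ) (m : ℕ) :
    ∫ x in (-π)..π, ∫ y in (-π)..π, cos (k * x) * cos (k * y) * (cos x - cos y) ^ m =
      (2 * π) ^ 2 / 2 ^ m * (-1) ^ k.natAbs * walkCount m (2 * k) * walkCount m 0 := by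
  have hexpand : ∀ x y : ℝ, cos (k * x) * cos (k * y) * (cos x - cos y) ^ m =
      ∑ ij ∈ antidiagonal m, (m.choose ij.1 * (-1 : ℝ) ^ ij.2) *
        (cos (k * x) * cos x ^ ij.1) * (cos (k * y) * cos y ^ ij.2) := by
    intro x y
    rw [sub_eq_add_neg, (Commute.all _ _).add_pow', mul_sum]
    refine sum_congr rfl fun ij _ => ?_
    rw [nsmul_eq_mul, neg_pow]
    ring
  have hinner : ∀ x : ℝ, ∫ y in (-π)..π, cos (k * x) * cos (k * y) * (cos x - cos y) ^ m =
      ∑ ij ∈ antidiagonal m, (m.choose ij.1 * (-1 : ℝ) ^ ij.2) *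
        (cos (k * x) * cos x ^ ij.1) * (2 * π * walkCount ij.2 k / 2 ^ ij.2) := by
    intro x
    simp_rw [hexpand]
    rw [intervalIntegral.integral_finsetSum fun _ _ =>
      (by fun_prop : Continuous _).intervalIntegrable _ _]
    simp only [intervalIntegral.integral_const_mul, integral_cos_intCast_mul_mul_cos_pow]
  simp_rw [hinner]
  rw [intervalIntegral.integral_finsetSum fun _ _ =>
    (by fun_prop : Continuous _).intervalIntegrable _ _]
  simp only [intervalIntegral.integral_mul_const, intervalIntegral.integral_const_mul,
    integral_cos_intCast_mul_mul_cos_pow]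
  have hpow : ∀ ij ∈ antidiagonal m, ((m.choose ij.1 * (-1 : ℝ) ^ ij.2) *
      (2 * π * walkCount ij.1 k / 2 ^ ij.1) * (2 * π * walkCount ij.2 k / 2 ^ ij.2)) =
      (2 * π) ^ 2 / 2 ^ m *
        ((m.choose ij.1 * (-1 : ℝ) ^ ij.2) * walkCount ij.1 k * walkCount ij.2 k) := by
    intro ij hij
    rw [← mem_antidiagonal.1 hij, pow_add]
    field_simp
  rw [sum_congr rfl hpow, ← mul_sum,
    sum_antidiagonal_choose_mul_neg_one_pow_mul_walkCount_mul_walkCount]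
  ring

theorem stochastic_walk_prob_series_general (k : ℤ) (t : ℝ) :
    (1 / (4 * π ^ 2)) *
        ∫ x in (-π)..π, ∫ y in (-π)..π,
          Real.cos (k * x) * Real.cos (k * y) *
            Real.exp (-(t / 2) * (Real.cos x - Real.cos y) ^ 2) =
      ∑' n : ℕ, if k.natAbs ≤ n then
          ((-1 : ℝ) ^ (n + k.natAbs) / 8 ^ n) * ((2 * n).choose n : ℝ) *
            ((2 * n).choose (n + k.natAbs) : ℝ) * t ^ n / (n.factorial : ℝ)
        else 0 := by
  have hcos : ∀ x y : ℝ, |cos (k * x) * cos (k * y)| ≤ 1 := fun x y => by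
    rw [abs_mul]
    exact mul_le_one₀ (abs_cos_le_one _) (abs_nonneg _) (abs_cos_le_one _)
  have hdiff : ∀ x y : ℝ, |(cos x - cos y) ^ 2| ≤ 4 := fun x y => by
    rw [abs_sq]
    nlinarith [neg_one_le_cos x, cos_le_one x, neg_one_le_cos y, cos_le_one y]
  rw [intervalIntegral_intervalIntegral_mul_exp_eq_tsum (f := fun x y => cos (k * x) * cos (k * y))
    (u := fun x y => (cos x - cos y) ^ 2) (by fun_prop) (by fun_prop) hcos hdiff, ← tsum_mul_left]
  congr 1 with n
  have hcentral : walkCount (2 * n) 0 = (2 * n).choose n := by simpa using walkCount_two_mul n 0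
  simp_rw [← pow_mul, integral_integral_cos_mul_cos_mul_cos_sub_cos_pow, walkCount_two_mul,
    hcentral]
  split_ifs with hkn
  · rw [neg_pow, div_pow, pow_mul, pow_add, show (8 : ℝ) ^ n = 2 ^ n * (2 ^ 2) ^ n by
      rw [← mul_pow]; norm_num]
    field_simp
    ring
  · rw [Nat.choose_eq_zero_of_lt (by omega)]
    simp

theorem stochastic_walk_prob_series (k : ℤ) (t : ℝ) (ht : 0 ≤ t) :
    (1 / (4 * π ^ 2)) *
        ∫ x in (-π)..π, ∫ y in (-π)..π,
          Real.cos (k * x) * Real.cos (k * y) *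
            Real.exp (-(t / 2) * (Real.cos x - Real.cos y) ^ 2) =
      ∑' n : ℕ, if k.natAbs ≤ n then
          ((-1 : ℝ) ^ (n + k.natAbs) / 8 ^ n) * ((2 * n).choose n : ℝ) *
            ((2 * n).choose (n + k.natAbs) : ℝ) * t ^ n / (n.factorial : ℝ)
        else 0 :=
  stochastic_walk_prob_series_general k t
end

section
/- Define for each integer k and t ≥ 0 the coefficient A_{n,k} = ((−1)^{n+k}/8^n)·C(2n,n)·C(2n,n+k) for n ≥ |k| and A_{n,k} = 0 otherwise. Then for every even natural number m ≥ 2, ∑_{k∈ℤ} k^m · ∑_{n≥0} A_{n,k} t^n/n! = ∑_{n=1}^{m/2} (1/8^n)·C(2n,n)·(t^n/n!)·∑_{j=0}^{2n} (−1)^j (j−n)^m C(2n,j); in particular this is a polynomial in t of degree m/2 with leading coefficient m!/((m/2)!·8^{m/2})·C(m, m/2). -/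
open Real Finset

/-- The Taylor coefficient `A_{n,k}` of the purely dissipative walk distribution. -/
noncomputable def walkCoeff (n : ℕ) (k : ℤ) : ℝ :=
  if k.natAbs ≤ n then
    ((-1 : ℝ) ^ (n + k.natAbs) / 8 ^ n) * ((2 * n).choose n : ℝ) *
      ((2 * n).choose (n + k.natAbs) : ℝ)
  else 0

/-!
The double series converges absolutely because `A_{n,k}` vanishes for `|k| > n` and
`|A_{n,k}| ≤ 16^n / 8^n = 2^n`, so the sums over `k` and `n` may be swapped. The `n`-th
coefficient is then the finite sum `∑_{|k| ≤ n} k^m A_{n,k}`; substituting `k = j - n` shows it is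
`C(2n,n) / 8^n` times the `2n`-th forward difference of `x ↦ (x - n)^m`, which vanishes when
`m < 2n` and equals `m!` when `m = 2n`.
-/

open Nat

section FiniteDifferences

variable {R : Type*} [CommRing R]

theorem sum_range_neg_one_pow_mul_choose_eq_fwdDiff_iter (f : R → R) (N : ℕ) (y : R) :
    ∑ j ∈ range (N + 1), (-1) ^ j * f (j + y) * (N.choose j : R) =
      (-1) ^ N * (fwdDiff 1)^[N] f y := by
  rw [fwdDiff_iter_eq_sum_shift, mul_sum]
  refine sum_congr rfl fun j hj => ?_
  have hjN : j ≤ N := Nat.lt_succ_iff.mp (mem_range.mp hj)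
  have hsign : (-1 : R) ^ N * (-1) ^ (N - j) = (-1) ^ j := by
    rw [← pow_add, show N + (N - j) = j + 2 * (N - j) by omega, pow_add, pow_mul, neg_one_sq,
      one_pow, mul_one]
  rw [zsmul_eq_mul, nsmul_one, add_comm y]
  push_cast
  rw [← hsign]
  ring

theorem sum_range_neg_one_pow_mul_sub_pow_mul_choose_of_lt {p N : ℕ} (h : p < N) (y : R) :
    ∑ j ∈ range (N + 1), (-1) ^ j * ((j : R) - y) ^ p * (N.choose j : R) = 0 := by
  simp_rw [sub_eq_add_neg]
  rw [sum_range_neg_one_pow_mul_choose_eq_fwdDiff_iter (· ^ p), fwdDiff_iter_pow_eq_zero_of_lt h,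
    Pi.zero_apply, mul_zero]

theorem sum_range_neg_one_pow_mul_sub_pow_mul_choose_self (N : ℕ) (y : R) :
    ∑ j ∈ range (N + 1), (-1) ^ j * ((j : R) - y) ^ N * (N.choose j : R) = (-1) ^ N * N ! := by
  simp_rw [sub_eq_add_neg]
  rw [sum_range_neg_one_pow_mul_choose_eq_fwdDiff_iter (· ^ N), fwdDiff_iter_eq_factorial]
  rfl

end FiniteDifferences

theorem summable_pow_mul_pow_div_factorial (p : ℕ) (x : ℝ) :
    Summable fun n : ℕ => (n : ℝ) ^ p * x ^ n / n ! := by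
  refine .of_norm_bounded
    ((Real.summable_pow_div_factorial (exp 1 * |x|)).mul_left (p ! : ℝ)) fun n => ?_
  have hpow : (n : ℝ) ^ p ≤ p ! * exp 1 ^ n := by
    have := pow_div_factorial_le_exp _ (Nat.cast_nonneg n) p
    rwa [div_le_iff₀ (by positivity), ← exp_one_pow, mul_comm] at this
  rw [norm_div, norm_mul, norm_pow, norm_pow, Real.norm_natCast, Real.norm_natCast,
    Real.norm_eq_abs, mul_pow, ← mul_div_assoc, ← mul_assoc]
  gcongr

theorem walkCoeff_eq_zero_of_lt {n : ℕ} {k : ℤ} (h : n < k.natAbs) : walkCoeff n k = 0 :=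
  if_neg h.not_ge

theorem walkCoeff_eq_zero_of_notMem_Icc {n : ℕ} {k : ℤ} (hk : k ∉ Icc (-n : ℤ) n) :
    walkCoeff n k = 0 :=
  walkCoeff_eq_zero_of_lt (by rw [mem_Icc] at hk; omega)

theorem abs_walkCoeff_le (n : ℕ) (k : ℤ) : |walkCoeff n k| ≤ 2 ^ n := by
  have hchoose (j : ℕ) : ((2 * n).choose j : ℝ) ≤ 4 ^ n := by
    rw [show (4 : ℝ) ^ n = ((2 ^ (2 * n) : ℕ) : ℝ) by push_cast; rw [pow_mul]; norm_num]
    exact_mod_cast Nat.choose_le_two_pow _ _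
  unfold walkCoeff
  split_ifs
  · rw [abs_mul, abs_mul, abs_div, abs_pow, abs_neg, abs_one, one_pow, abs_pow, abs_of_pos
      (by norm_num : (0 : ℝ) < 8), Nat.abs_cast, Nat.abs_cast]
    calc 1 / 8 ^ n * ((2 * n).choose n : ℝ) * ((2 * n).choose (n + k.natAbs) : ℝ)
        ≤ 1 / 8 ^ n * 4 ^ n * 4 ^ n := by gcongr <;> exact hchoose _
      _ = 2 ^ n := by rw [mul_assoc, ← mul_pow, one_div, ← div_eq_inv_mul, ← div_pow]; norm_num
  · simp

theorem walkCoeff_natCast_sub {n j : ℕ} (hj : j ≤ 2 * n) :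
    walkCoeff n ((j : ℤ) - n) = (-1) ^ j / 8 ^ n * ((2 * n).choose n : ℝ) * (2 * n).choose j := by
  rw [walkCoeff, if_pos (by omega)]
  rcases le_total n j with hnj | hjn
  · rw [show n + ((j : ℤ) - n).natAbs = j by omega]
  · obtain ⟨a, rfl⟩ := Nat.exists_eq_add_of_le hjn
    rw [show j + a + ((j : ℤ) - (j + a : ℕ)).natAbs = j + 2 * a by omega, pow_add, pow_mul,
      neg_one_sq, one_pow, mul_one, ← Nat.choose_symm (by omega : j + 2 * a ≤ 2 * (j + a)),
      show 2 * (j + a) - (j + 2 * a) = j by omega]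

theorem tsum_pow_mul_walkCoeff (m n : ℕ) :
    ∑' k : ℤ, (k : ℝ) ^ m * walkCoeff n k =
      1 / 8 ^ n * ((2 * n).choose n : ℝ) *
        ∑ j ∈ range (2 * n + 1), (-1) ^ j * ((j : ℝ) - n) ^ m * (2 * n).choose j := by
  have hsupp : (Function.support fun k : ℤ => (k : ℝ) ^ m * walkCoeff n k) ⊆
      Set.range fun j : ℕ => (j : ℤ) - n := by
    intro k hk
    have : k.natAbs ≤ n := by
      by_contra! h
      exact hk (by simp [walkCoeff_eq_zero_of_lt h])
    exact ⟨(k + n).toNat, by dsimp only; omega⟩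
  have hinj : Function.Injective fun j : ℕ => (j : ℤ) - n := fun _ _ h => by simpa using h
  rw [← hinj.tsum_eq hsupp,
    tsum_eq_sum (s := range (2 * n + 1)) fun j hj => ?_, mul_sum]
  · refine sum_congr rfl fun j hj => ?_
    rw [walkCoeff_natCast_sub (by simpa [Nat.lt_succ_iff] using hj)]
    push_cast
    ring
  · rw [walkCoeff_eq_zero_of_lt (by simp at hj; omega), mul_zero]

theorem tsum_abs_pow_mul_walkCoeff_le (m n : ℕ) :
    ∑' k : ℤ, |(k : ℝ) ^ m * walkCoeff n k| ≤ (2 * n + 1) * (n ^ m * 2 ^ n) := by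
  rw [tsum_eq_sum (s := Icc (-n : ℤ) n) fun k hk => by
    rw [walkCoeff_eq_zero_of_notMem_Icc hk, mul_zero, abs_zero]]
  calc _ ≤ #(Icc (-n : ℤ) n) • ((n : ℝ) ^ m * 2 ^ n) := sum_le_card_nsmul _ _ _ fun k hk => ?_
    _ = _ := by
      rw [Int.card_Icc, nsmul_eq_mul, show (n + 1 - -n : ℤ).toNat = 2 * n + 1 by omega]
      push_cast
      rfl
  have hkn : |(k : ℝ)| ≤ n := by
    rw [mem_Icc] at hk
    exact_mod_cast abs_le.2 hk
  rw [abs_mul, abs_pow]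
  gcongr
  exact abs_walkCoeff_le n k

theorem summable_uncurry_pow_mul_walkCoeff_series (m : ℕ) (t : ℝ) :
    Summable (Function.uncurry fun (k : ℤ) (n : ℕ) =>
      (k : ℝ) ^ m * (walkCoeff n k * t ^ n / n !)) := by
  have habs (n : ℕ) (k : ℤ) : |(k : ℝ) ^ m * (walkCoeff n k * t ^ n / n !)| =
      |(k : ℝ) ^ m * walkCoeff n k| * (|t| ^ n / n !) := by
    rw [← mul_div_assoc, ← mul_assoc, abs_div, abs_mul, abs_mul, abs_pow, abs_pow, Nat.abs_cast,
      mul_div_assoc]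
  have hsum : Summable fun p : ℕ × ℤ =>
      |(p.2 : ℝ) ^ m * (walkCoeff p.1 p.2 * t ^ p.1 / p.1 !)| := by
    refine (summable_prod_of_nonneg fun _ => abs_nonneg _).2 ⟨fun n => ?_, ?_⟩
    · exact summable_of_ne_finset_zero (s := Icc (-n : ℤ) n) fun k hk => by
        rw [walkCoeff_eq_zero_of_notMem_Icc hk, zero_mul, zero_div, mul_zero, abs_zero]
    · refine .of_nonneg_of_le (fun _ => tsum_nonneg fun _ => abs_nonneg _) (fun n => ?_)
        (((summable_pow_mul_pow_div_factorial (m + 1) (2 * |t|)).mul_left 2).add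
          (summable_pow_mul_pow_div_factorial m (2 * |t|)))
      simp only [habs, tsum_mul_right]
      calc _ ≤ (2 * n + 1) * (n ^ m * 2 ^ n) * (|t| ^ n / n !) := by
            gcongr
            exact tsum_abs_pow_mul_walkCoeff_le m n
        _ = _ := by ring
  exact summable_abs_iff.1 hsum.prod_symm

theorem moments_purely_dissipative_general (m : ℕ) (hm : Even m) (hm2 : 2 ≤ m)
    (t : ℝ) :
    (∑' k : ℤ, (k : ℝ) ^ m *
        ∑' n : ℕ, walkCoeff n k * t ^ n / (n.factorial : ℝ)) =
      ∑ n ∈ Finset.Icc 1 (m / 2),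
        (1 / 8 ^ n) * ((2 * n).choose n : ℝ) * (t ^ n / (n.factorial : ℝ)) *
          ∑ j ∈ Finset.range (2 * n + 1),
            (-1 : ℝ) ^ j * ((j : ℝ) - (n : ℝ)) ^ m * ((2 * n).choose j : ℝ) ∧
    (1 / 8 ^ (m / 2)) * ((2 * (m / 2)).choose (m / 2) : ℝ) * (1 / ((m / 2).factorial : ℝ)) *
        ∑ j ∈ Finset.range (2 * (m / 2) + 1),
          (-1 : ℝ) ^ j * ((j : ℝ) - ((m / 2 : ℕ) : ℝ)) ^ m * ((2 * (m / 2)).choose j : ℝ) =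
      (m.factorial : ℝ) / (((m / 2).factorial : ℝ) * 8 ^ (m / 2)) * (m.choose (m / 2) : ℝ) := by
  refine ⟨?_, ?_⟩
  · calc _ = ∑' (k : ℤ) (n : ℕ), (k : ℝ) ^ m * (walkCoeff n k * t ^ n / n !) :=
          tsum_congr fun k => tsum_mul_left.symm
      _ = ∑' (n : ℕ) (k : ℤ), (k : ℝ) ^ m * (walkCoeff n k * t ^ n / n !) :=
          (summable_uncurry_pow_mul_walkCoeff_series m t).tsum_comm.symm
      _ = ∑' n : ℕ, 1 / 8 ^ n * ((2 * n).choose n : ℝ) * (t ^ n / n !) *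
            ∑ j ∈ range (2 * n + 1), (-1) ^ j * ((j : ℝ) - n) ^ m * (2 * n).choose j := by
          refine tsum_congr fun n => ?_
          rw [mul_right_comm _ (t ^ n / _), ← tsum_pow_mul_walkCoeff, ← tsum_mul_right]
          simp_rw [mul_div_assoc, mul_assoc]
      _ = _ := tsum_eq_sum fun n hn => ?_
    rcases Nat.eq_zero_or_pos n with rfl | hn0
    · simp [zero_pow (by omega : m ≠ 0)]
    · rw [sum_range_neg_one_pow_mul_sub_pow_mul_choose_of_lt (by simp at hn; omega), mul_zero]
  · rw [two_mul_div_two_of_even hm, sum_range_neg_one_pow_mul_sub_pow_mul_choose_self,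
      hm.neg_one_pow]
    field_simp

theorem moments_purely_dissipative (m : ℕ) (hm : Even m) (hm2 : 2 ≤ m)
    (t : ℝ) (ht : 0 ≤ t) :
    (∑' k : ℤ, (k : ℝ) ^ m *
        ∑' n : ℕ, walkCoeff n k * t ^ n / (n.factorial : ℝ)) =
      ∑ n ∈ Finset.Icc 1 (m / 2),
        (1 / 8 ^ n) * ((2 * n).choose n : ℝ) * (t ^ n / (n.factorial : ℝ)) *
          ∑ j ∈ Finset.range (2 * n + 1),
            (-1 : ℝ) ^ j * ((j : ℝ) - (n : ℝ)) ^ m * ((2 * n).choose j : ℝ) ∧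
    (1 / 8 ^ (m / 2)) * ((2 * (m / 2)).choose (m / 2) : ℝ) * (1 / ((m / 2).factorial : ℝ)) *
        ∑ j ∈ Finset.range (2 * (m / 2) + 1),
          (-1 : ℝ) ^ j * ((j : ℝ) - ((m / 2 : ℕ) : ℝ)) ^ m * ((2 * (m / 2)).choose j : ℝ) =
      (m.factorial : ℝ) / (((m / 2).factorial : ℝ) * 8 ^ (m / 2)) * (m.choose (m / 2) : ℝ) :=
  moments_purely_dissipative_general m hm hm2 t
end

section
/- For m = 2 the formula of the previous family specializes to: ∑_{k∈ℤ} k² · ∑_{n≥|k|} ((−1)^{n+k}/8^n)·C(2n,n)·C(2n,n+k)·t^n/n! = t/2 for all t ≥ 0. -/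
/-!
The double series converges absolutely, its terms being bounded by `(8|t|)ⁿ/n!` and vanishing
for `|k| > n`, so the two summations may be exchanged. For fixed `n` the sum over `k` is finite;
substituting `m = n + k` turns it into `C(2n,n) tⁿ / (8ⁿ n!)` times
`∑ₘ (-1)^(2n-m) C(2n,m) (m - n)²`, the `2n`-th forward difference at `0` of a quadratic
polynomial. This vanishes for `2n > 2`, and trivially for `n = 0`, so only `n = 1` contributes,
giving `t / 2`.
-/

open Real Finset

open Polynomial in
theorem sum_range_neg_one_pow_mul_choose_mul_eval_eq_zero {R : Type*} [CommRing R] {N : ℕ}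
    {P : R[X]} (hP : P.natDegree < N) :
    ∑ m ∈ range (N + 1), (-1 : R) ^ (N - m) * N.choose m * P.eval (m : R) = 0 := by
  have h := congr_fun (fwdDiff_iter_eq_zero_of_degree_lt hP) 0
  rw [fwdDiff_iter_eq_sum_shift] at h
  simpa [zsmul_eq_mul] using h

open Polynomial in
theorem sum_range_neg_one_pow_mul_choose_mul_sub_sq_eq_zero {R : Type*} [CommRing R] {N : ℕ}
    (hN : 3 ≤ N) (c : R) :
    ∑ m ∈ range (N + 1), (-1 : R) ^ (N - m) * N.choose m * ((m : R) - c) ^ 2 = 0 := by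
  have hdeg : ((X - C c) ^ 2).natDegree < N :=
    (natDegree_pow_le_of_le 2 (natDegree_X_sub_C_le c)).trans_lt (by omega)
  simpa using sum_range_neg_one_pow_mul_choose_mul_eval_eq_zero hdeg

noncomputable def dissipativeTerm (t : ℝ) (k : ℤ) (n : ℕ) : ℝ :=
  if k.natAbs ≤ n then
    ((-1 : ℝ) ^ (n + k.natAbs) / 8 ^ n) * ((2 * n).choose n : ℝ) *
      ((2 * n).choose (n + k.natAbs) : ℝ) * t ^ n / (n.factorial : ℝ)
  else 0

theorem dissipativeTerm_eq_zero {t : ℝ} {k : ℤ} {n : ℕ} (hk : k ∉ Icc (-(n : ℤ)) n) :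
    dissipativeTerm t k n = 0 := by
  rw [mem_Icc] at hk
  rw [dissipativeTerm, if_neg (by omega)]

theorem sum_Icc_sq_mul_dissipativeTerm (t : ℝ) (n : ℕ) :
    ∑ k ∈ Icc (-(n : ℤ)) n, (k : ℝ) ^ 2 * dissipativeTerm t k n =
      (2 * n).choose n * t ^ n / (8 ^ n * n.factorial) *
        ∑ m ∈ range (2 * n + 1),
          (-1 : ℝ) ^ (2 * n - m) * (2 * n).choose m * ((m : ℝ) - n) ^ 2 := by
  rw [mul_sum]
  symm
  refine sum_nbij' (fun m => (m : ℤ) - n) (fun k => (k + n).toNat) (fun m hm => ?_)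
    (fun k hk => ?_) (fun m hm => ?_) (fun k hk => ?_) (fun m hm => ?_)
  · simp only [mem_range, mem_Icc] at hm ⊢; omega
  · simp only [mem_range, mem_Icc] at hk ⊢; omega
  · omega
  · simp only [mem_Icc] at hk; omega
  rw [mem_range] at hm
  have hsign : (-1 : ℝ) ^ (n + ((m : ℤ) - n).natAbs) = (-1) ^ (2 * n - m) :=
    neg_one_pow_congr (by simp only [Nat.even_iff]; omega)
  have hchoose : (2 * n).choose (n + ((m : ℤ) - n).natAbs) = (2 * n).choose m := by
    rcases le_total m n with h | h
    · rw [show n + ((m : ℤ) - n).natAbs = 2 * n - m by omega, Nat.choose_symm (by omega)]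
    · rw [show n + ((m : ℤ) - n).natAbs = m by omega]
  rw [dissipativeTerm, if_pos (by omega), hsign, hchoose]
  push_cast
  ring

theorem tsum_sq_mul_dissipativeTerm (t : ℝ) (n : ℕ) :
    ∑' k : ℤ, (k : ℝ) ^ 2 * dissipativeTerm t k n = if n = 1 then t / 2 else 0 := by
  rw [tsum_eq_sum fun k hk => by rw [dissipativeTerm_eq_zero hk, mul_zero],
    sum_Icc_sq_mul_dissipativeTerm]
  rcases n with _ | _ | n
  · simp
  · norm_num [sum_range_succ]
    ring
  · rw [sum_range_neg_one_pow_mul_choose_mul_sub_sq_eq_zero (by omega)]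
    simp

theorem abs_sq_mul_dissipativeTerm_le (t : ℝ) (k : ℤ) (n : ℕ) :
    |(k : ℝ) ^ 2 * dissipativeTerm t k n| ≤ (8 * |t|) ^ n / n.factorial := by
  unfold dissipativeTerm
  split_ifs with hk
  · have hk4 : (k : ℝ) ^ 2 ≤ 4 ^ n := by
      have h : k.natAbs ^ 2 ≤ 4 ^ n := calc
        k.natAbs ^ 2 ≤ (2 ^ n) ^ 2 := Nat.pow_le_pow_left (hk.trans n.lt_two_pow_self.le) 2
        _ = 4 ^ n := by rw [← pow_mul, mul_comm, pow_mul]; norm_num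
      rw [← sq_abs, ← Int.cast_abs, ← Nat.cast_natAbs]
      exact_mod_cast h
    have hchoose (i : ℕ) : ((2 * n).choose i : ℝ) ≤ 4 ^ n := by
      exact_mod_cast (Nat.choose_le_two_pow _ _).trans_eq (by rw [pow_mul]; norm_num)
    calc _ = (k : ℝ) ^ 2 * ((2 * n).choose n * (2 * n).choose (n + k.natAbs) * |t| ^ n /
          (8 ^ n * n.factorial)) := by
          rw [abs_mul, abs_of_nonneg (sq_nonneg _)]
          congr 1
          simp [abs_div, abs_mul, abs_pow]
          ring
      _ ≤ 4 ^ n * (4 ^ n * 4 ^ n * |t| ^ n / (8 ^ n * n.factorial)) := by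
          gcongr
          exacts [hchoose _, hchoose _]
      _ = (8 * |t|) ^ n / n.factorial := by
          field_simp
          rw [← pow_mul, mul_comm n 3, pow_mul, ← mul_pow, ← mul_pow, ← mul_assoc]
          norm_num
  · simp
    positivity

theorem summable_sq_mul_dissipativeTerm (t : ℝ) :
    Summable (Function.uncurry fun (k : ℤ) (n : ℕ) =>
      (k : ℝ) ^ 2 * dissipativeTerm t k n) := by
  have habs : Summable fun p : ℕ × ℤ => |(p.2 : ℝ) ^ 2 * dissipativeTerm t p.2 p.1| := by
    refine (summable_prod_of_nonneg fun _ => abs_nonneg _).2 ⟨fun n => ?_, ?_⟩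
    · exact summable_of_ne_finset_zero fun k hk => by
        rw [dissipativeTerm_eq_zero hk, mul_zero, abs_zero]
    refine .of_nonneg_of_le (fun n => tsum_nonneg fun _ => abs_nonneg _) (fun n => ?_)
      (Real.summable_pow_div_factorial (24 * |t|))
    rw [tsum_eq_sum fun k hk => by rw [dissipativeTerm_eq_zero hk, mul_zero, abs_zero]]
    calc ∑ k ∈ Icc (-(n : ℤ)) n, |(k : ℝ) ^ 2 * dissipativeTerm t k n|
        ≤ ∑ _k ∈ Icc (-(n : ℤ)) n, (8 * |t|) ^ n / n.factorial :=
          sum_le_sum fun k _ => abs_sq_mul_dissipativeTerm_le t k n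
      _ = (1 + n * 2) * ((8 * |t|) ^ n / n.factorial) := by
          rw [sum_const, Int.card_Icc, nsmul_eq_mul,
            show ((n : ℤ) + 1 - -n).toNat = 2 * n + 1 by omega]
          push_cast
          ring
      _ ≤ (1 + 2) ^ n * ((8 * |t|) ^ n / n.factorial) := by
          gcongr
          exact one_add_mul_le_pow (by norm_num) n
      _ = (24 * |t|) ^ n / n.factorial := by
          rw [← mul_div_assoc, ← mul_pow, ← mul_assoc]
          norm_num
  exact summable_abs_iff.1 habs.prod_symm

theorem second_moment_purely_dissipative_general (t : ℝ) :
    ∑' k : ℤ, (k : ℝ) ^ 2 *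
        ∑' n : ℕ, (if k.natAbs ≤ n then
            ((-1 : ℝ) ^ (n + k.natAbs) / 8 ^ n) * ((2 * n).choose n : ℝ) *
              ((2 * n).choose (n + k.natAbs) : ℝ) * t ^ n / (n.factorial : ℝ)
          else 0) = t / 2 := calc
  _ = ∑' (k : ℤ) (n : ℕ), (k : ℝ) ^ 2 * dissipativeTerm t k n :=
        tsum_congr fun _ => tsum_mul_left.symm
  _ = ∑' (n : ℕ) (k : ℤ), (k : ℝ) ^ 2 * dissipativeTerm t k n :=
        (summable_sq_mul_dissipativeTerm t).tsum_comm.symm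
  _ = ∑' n : ℕ, if n = 1 then t / 2 else 0 := tsum_congr (tsum_sq_mul_dissipativeTerm t)
  _ = t / 2 := tsum_ite_eq 1 _

theorem second_moment_purely_dissipative (t : ℝ) (ht : 0 ≤ t) :
    ∑' k : ℤ, (k : ℝ) ^ 2 *
        ∑' n : ℕ, (if k.natAbs ≤ n then
            ((-1 : ℝ) ^ (n + k.natAbs) / 8 ^ n) * ((2 * n).choose n : ℝ) *
              ((2 * n).choose (n + k.natAbs) : ℝ) * t ^ n / (n.factorial : ℝ)
          else 0) = t / 2 :=
  second_moment_purely_dissipative_general t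
end

section
/- Let Φ : M_n(ℂ) → M_n(ℂ) be a unital quantum channel (completely positive, trace preserving, Φ(I) = I), let σ be a density matrix and ρ = Φ(σ). Then the eigenvalue vector of ρ (in decreasing order) is majorized by that of σ; consequently Tr(ρ²) ≤ Tr(σ²). -/
/-!
Write `σ = ∑ⱼ μⱼ uⱼuⱼ*` and let `(vᵢ)` be an eigenbasis of `ρ = Φ σ`, so that
`λᵢ = ∑ⱼ Dᵢⱼ μⱼ` with `Dᵢⱼ = ⟨vᵢ, Φ(uⱼuⱼ*) vᵢ⟩`. Positivity of `Φ` makes `D` nonnegative,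
unitality gives row sums `1` and trace preservation column sums `1`: `D` is doubly stochastic.
For a set `s` of indices, `∑_{i ∈ s} λᵢ = ∑ⱼ cⱼ μⱼ` with weights `0 ≤ cⱼ ≤ 1` summing to `|s|`,
and such a combination never exceeds the sum of the `|s|` largest `μⱼ`: moving weight from
small to large values only increases it. Purity follows from Jensen's inequality for `x ↦ x²`
applied row by row.
-/

open Matrix
open scoped ComplexOrder

/-- A linear map on `n × n` complex matrices is completely positive if all its
ampliations `Φ ⊗ id_m` send positive semidefinite matrices to positive
semidefinite matrices. -/
def IsCompletelyPositive {n : ℕ}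
    (Φ : Matrix (Fin n) (Fin n) ℂ →ₗ[ℂ] Matrix (Fin n) (Fin n) ℂ) : Prop :=
  ∀ (m : ℕ) (M : Matrix (Fin n × Fin m) (Fin n × Fin m) ℂ), M.PosSemidef →
    (Matrix.of fun p q : Fin n × Fin m =>
      Φ (Matrix.of fun i j : Fin n => M (i, p.2) (j, q.2)) p.1 q.1).PosSemidef

section Majorization

open Finset

variable {ι : Type*} [Fintype ι]

theorem exists_card_eq_forall_notMem_le_of_mem [DecidableEq ι] (x : ι → ℝ) {k : ℕ}
    (hk : k ≤ Fintype.card ι) :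
    ∃ t : Finset ι, #t = k ∧ ∀ i ∈ t, ∀ j ∉ t, x j ≤ x i := by
  obtain ⟨t, ht, hmax⟩ := exists_max_image (univ.powersetCard k) (fun t => ∑ j ∈ t, x j)
    (powersetCard_nonempty.mpr hk)
  have htk : #t = k := (mem_powersetCard.mp ht).2
  refine ⟨t, htk, fun i hi j hj => ?_⟩
  have hj' : j ∉ t.erase i := fun h => hj (mem_of_mem_erase h)
  have hswap : insert j (t.erase i) ∈ univ.powersetCard k := by
    rw [mem_powersetCard, card_insert_of_notMem hj', card_erase_of_mem hi, htk]
    have : 0 < k := htk ▸ card_pos.mpr ⟨i, hi⟩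
    exact ⟨subset_univ _, by omega⟩
  have := hmax _ hswap
  rw [sum_insert hj', sum_erase_eq_sub hi] at this
  linarith

theorem sum_mul_le_sum_of_forall_le [DecidableEq ι] {c x : ι → ℝ} {t : Finset ι} {m : ℝ}
    (hc₀ : ∀ j, 0 ≤ c j) (hc₁ : ∀ j, c j ≤ 1) (hct : ∑ j, c j = #t)
    (hin : ∀ j ∈ t, m ≤ x j) (hout : ∀ j ∉ t, x j ≤ m) :
    ∑ j, c j * x j ≤ ∑ j ∈ t, x j := by
  -- `∑ⱼ (cⱼ - 𝟙ₜ j) = 0`, so `x` may be shifted by `m` for free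
  have hshift : ∑ j, c j * x j - ∑ j ∈ t, x j =
      ∑ j, (c j - if j ∈ t then 1 else 0) * (x j - m) := by
    simp only [sub_mul, mul_sub, sum_sub_distrib, ite_mul, one_mul, zero_mul, sum_ite_mem,
      univ_inter, ← sum_mul, hct, sum_const, nsmul_eq_mul]
    ring
  have : ∑ j, (c j - if j ∈ t then 1 else 0) * (x j - m) ≤ 0 := by
    refine sum_nonpos fun j _ => ?_
    split_ifs with hj
    · exact mul_nonpos_of_nonpos_of_nonneg (by linarith [hc₁ j]) (by linarith [hin j hj])
    · exact mul_nonpos_of_nonneg_of_nonpos (by linarith [hc₀ j]) (by linarith [hout j hj])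
  linarith

theorem exists_card_eq_sum_mul_le_sum {c : ι → ℝ} (hc₀ : ∀ j, 0 ≤ c j) (hc₁ : ∀ j, c j ≤ 1)
    {k : ℕ} (hck : ∑ j, c j = k) (x : ι → ℝ) :
    ∃ t : Finset ι, #t = k ∧ ∑ j, c j * x j ≤ ∑ j ∈ t, x j := by
  classical
  have hk : k ≤ Fintype.card ι := by
    have : ∑ j, c j ≤ ∑ _j : ι, 1 := sum_le_sum fun j _ => hc₁ j
    rw [hck, sum_const, card_univ, nsmul_one] at this
    exact_mod_cast this
  obtain ⟨t, rfl, hsep⟩ := exists_card_eq_forall_notMem_le_of_mem x hk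
  obtain ⟨m, hin, hout⟩ : ∃ m, (∀ i ∈ t, m ≤ x i) ∧ ∀ j ∉ t, x j ≤ m := by
    rcases t.eq_empty_or_nonempty with rfl | ht
    · exact ⟨∑ j, |x j|, by simp, fun j _ =>
        (le_abs_self _).trans (single_le_sum (fun j _ => abs_nonneg (x j)) (mem_univ j))⟩
    · exact ⟨t.inf' ht x, fun i hi => inf'_le x hi,
        fun j hj => le_inf' ht x fun i hi => hsep i hi j hj⟩
  exact ⟨t, rfl, sum_mul_le_sum_of_forall_le hc₀ hc₁ hck hin hout⟩

variable [DecidableEq ι] {M : Matrix ι ι ℝ}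

theorem exists_card_eq_sum_mulVec_le_of_mem_doublyStochastic (hM : M ∈ doublyStochastic ℝ ι)
    (x : ι → ℝ) (s : Finset ι) :
    ∃ t : Finset ι, #t = #s ∧ ∑ i ∈ s, (M *ᵥ x) i ≤ ∑ i ∈ t, x i := by
  have hsum : ∑ i ∈ s, (M *ᵥ x) i = ∑ j, (∑ i ∈ s, M i j) * x j := by
    simp only [mulVec, dotProduct, sum_mul]
    exact sum_comm
  rw [hsum]
  refine exists_card_eq_sum_mul_le_sum
    (fun j => sum_nonneg fun i _ => nonneg_of_mem_doublyStochastic hM) (fun j => ?_) ?_ x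
  · exact (sum_le_sum_of_subset_of_nonneg (subset_univ s)
      fun i _ _ => nonneg_of_mem_doublyStochastic hM).trans_eq
        (sum_col_of_mem_doublyStochastic hM j)
  · rw [sum_comm, sum_congr rfl fun i _ => sum_row_of_mem_doublyStochastic hM i]
    simp

theorem ConvexOn.sum_map_mulVec_le_of_mem_doublyStochastic {s : Set ℝ} {f : ℝ → ℝ}
    (hf : ConvexOn ℝ s f) (hM : M ∈ doublyStochastic ℝ ι) {x : ι → ℝ} (hx : ∀ j, x j ∈ s) :
    ∑ i, f ((M *ᵥ x) i) ≤ ∑ j, f (x j) :=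
  calc ∑ i, f ((M *ᵥ x) i) ≤ ∑ i, ∑ j, M i j * f (x j) := sum_le_sum fun i _ =>
        hf.map_sum_le (fun j _ => nonneg_of_mem_doublyStochastic hM)
          (sum_row_of_mem_doublyStochastic hM i) fun j _ => hx j
    _ = ∑ j, f (x j) := by
        rw [sum_comm]
        simp only [← sum_mul, sum_col_of_mem_doublyStochastic hM, one_mul]

end Majorization

theorem IsCompletelyPositive.map_posSemidef {n : ℕ}
    {Φ : Matrix (Fin n) (Fin n) ℂ →ₗ[ℂ] Matrix (Fin n) (Fin n) ℂ} (hΦ : IsCompletelyPositive Φ)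
    {A : Matrix (Fin n) (Fin n) ℂ} (hA : A.PosSemidef) : (Φ A).PosSemidef := by
  let e : Fin n × Fin 1 ≃ Fin n := Equiv.prodUnique _ _
  have h := hΦ 1 (A.submatrix e e) ((posSemidef_submatrix_equiv e).mpr hA)
  rwa [← posSemidef_submatrix_equiv e.symm] at h

theorem Matrix.posSemidef_single_one {ι 𝕜 : Type*} [DecidableEq ι] [RCLike 𝕜] (j : ι) :
    (single j j (1 : 𝕜)).PosSemidef := by
  rw [← diagonal_single]
  exact posSemidef_diagonal_iff.mpr fun i => by
    rcases eq_or_ne i j with rfl | h <;> simp [*]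

section Channel

open Unitary

variable {ι : Type*} [Fintype ι] [DecidableEq ι] {𝕜 : Type*} [RCLike 𝕜]

theorem Matrix.trace_conjStarAlgAut (U : unitary (Matrix ι ι 𝕜)) (A : Matrix ι ι 𝕜) :
    (conjStarAlgAut 𝕜 _ U A).trace = A.trace := by
  rw [conjStarAlgAut_apply, trace_mul_cycle, coe_star_mul_self, one_mul]

theorem Matrix.PosSemidef.conjStarAlgAut {A : Matrix ι ι 𝕜} (hA : A.PosSemidef)
    (U : unitary (Matrix ι ι 𝕜)) : (conjStarAlgAut 𝕜 _ U A).PosSemidef := by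
  simpa [star_eq_conjTranspose] using hA.mul_mul_conjTranspose_same (U : Matrix ι ι 𝕜)

theorem Matrix.IsHermitian.re_trace_mul_self {A : Matrix ι ι 𝕜} (hA : A.IsHermitian) :
    RCLike.re (A * A).trace = ∑ i, hA.eigenvalues i ^ 2 := by
  conv_lhs => rw [hA.spectral_theorem, ← map_mul, trace_conjStarAlgAut, diagonal_mul_diagonal,
    trace_diagonal]
  simp [sq]

variable (Φ : Matrix ι ι ℂ →ₗ[ℂ] Matrix ι ι ℂ)

/-- Entry `(i, j)` is `⟨vᵢ, Φ(uⱼ uⱼ*) vᵢ⟩` for the columns `uⱼ` of `U` and `vᵢ` of `V`. -/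
noncomputable def transitionMatrix (U V : unitary (Matrix ι ι ℂ)) : Matrix ι ι ℝ :=
  of fun i j => (conjStarAlgAut ℂ _ (star V) (Φ (conjStarAlgAut ℂ _ U (single j j 1))) i i).re

variable {Φ}

theorem transitionMatrix_mem_doublyStochastic
    (hpos : ∀ A : Matrix ι ι ℂ, A.PosSemidef → (Φ A).PosSemidef)
    (htr : ∀ A : Matrix ι ι ℂ, (Φ A).trace = A.trace) (hunital : Φ 1 = 1)
    (U V : unitary (Matrix ι ι ℂ)) : transitionMatrix Φ U V ∈ doublyStochastic ℝ ι := by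
  refine mem_doublyStochastic_iff_sum.mpr ⟨fun i j => ?_, fun i => ?_, fun j => ?_⟩
  · have := (hpos _ ((posSemidef_single_one j).conjStarAlgAut U)).conjStarAlgAut (star V)
    exact (Complex.nonneg_iff.mp this.diag_nonneg).1
  · simp only [transitionMatrix, of_apply]
    rw [← Complex.re_sum, ← Matrix.sum_apply, ← map_sum, ← map_sum, ← map_sum, sum_single_one,
      map_one, hunital, map_one, one_apply_eq, Complex.one_re]
  · simp only [transitionMatrix, of_apply]
    rw [← Complex.re_sum]
    change (trace (_ : Matrix ι ι ℂ)).re = 1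
    rw [trace_conjStarAlgAut, htr, trace_conjStarAlgAut, trace_single_eq_same, Complex.one_re]

theorem Matrix.IsHermitian.eigenvalues_map_eq_transitionMatrix_mulVec {A : Matrix ι ι ℂ}
    (hA : A.IsHermitian) (hΦA : (Φ A).IsHermitian) :
    hΦA.eigenvalues =
      transitionMatrix Φ hA.eigenvectorUnitary hΦA.eigenvectorUnitary *ᵥ hA.eigenvalues := by
  have hdiag : diagonal (RCLike.ofReal ∘ hA.eigenvalues) =
      ∑ j, (hA.eigenvalues j : ℂ) • single j j (1 : ℂ) := by
    simp [← sum_single_eq_diagonal]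
  have hΦ : Φ A = ∑ j, (hA.eigenvalues j : ℂ) •
      Φ (conjStarAlgAut ℂ _ hA.eigenvectorUnitary (single j j 1)) := by
    conv_lhs => rw [hA.spectral_theorem, hdiag]
    simp only [map_sum, map_smul]
  have hdiagΦ := hΦA.conjStarAlgAut_star_eigenvectorUnitary
  generalize hΦA.eigenvectorUnitary = V at hdiagΦ ⊢
  conv_lhs at hdiagΦ => rw [hΦ]
  ext i
  have := congr_arg Complex.re (congr_fun (congr_fun hdiagΦ i) i)
  simp only [map_sum, map_smul, Matrix.sum_apply, Matrix.smul_apply, smul_eq_mul, Complex.re_sum,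
    Complex.re_ofReal_mul, diagonal_apply_eq, Function.comp_apply,
    RCLike.ofReal_eq_complex_ofReal, Complex.ofReal_re] at this
  rw [← this]
  simp only [mulVec, dotProduct, transitionMatrix, of_apply, mul_comm]

theorem unital_channel_majorizes_general {n : ℕ}
    (Φ : Matrix (Fin n) (Fin n) ℂ →ₗ[ℂ] Matrix (Fin n) (Fin n) ℂ)
    (hCP : IsCompletelyPositive Φ)
    (hTP : ∀ A : Matrix (Fin n) (Fin n) ℂ, (Φ A).trace = A.trace)
    (hUnital : Φ 1 = 1)
    (σ : Matrix (Fin n) (Fin n) ℂ) (hσ : σ.PosSemidef)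
    (ρ : Matrix (Fin n) (Fin n) ℂ) (hρdef : ρ = Φ σ) (hρ : ρ.IsHermitian) :
    -- majorization λ(ρ) ≺ λ(σ): every partial sum of eigenvalues of ρ is
    -- dominated by the sum of equally many eigenvalues of σ, with equal totals
    ((∀ s : Finset (Fin n), ∃ t : Finset (Fin n), t.card = s.card ∧
        ∑ i ∈ s, hρ.eigenvalues i ≤ ∑ i ∈ t, hσ.isHermitian.eigenvalues i) ∧
      ∑ i, hρ.eigenvalues i = ∑ i, hσ.isHermitian.eigenvalues i) ∧
    -- consequently purity does not increase
    ((ρ * ρ).trace).re ≤ ((σ * σ).trace).re := by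
  subst hρdef
  have hD := transitionMatrix_mem_doublyStochastic (fun _ => hCP.map_posSemidef) hTP hUnital
    hσ.isHermitian.eigenvectorUnitary hρ.eigenvectorUnitary
  have heig := hσ.isHermitian.eigenvalues_map_eq_transitionMatrix_mulVec hρ
  refine ⟨⟨fun s => ?_, ?_⟩, ?_⟩
  · rw [heig]
    exact exists_card_eq_sum_mulVec_le_of_mem_doublyStochastic hD _ s
  · rw [heig]
    exact sum_mulVec_of_mem_doublyStochastic hD
  · rw [← RCLike.re_to_complex, ← RCLike.re_to_complex, hρ.re_trace_mul_self,
      hσ.isHermitian.re_trace_mul_self, heig]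
    exact (even_two.convexOn_pow (𝕜 := ℝ)).sum_map_mulVec_le_of_mem_doublyStochastic hD
      fun _ => Set.mem_univ _

theorem unital_channel_majorizes {n : ℕ}
    (Φ : Matrix (Fin n) (Fin n) ℂ →ₗ[ℂ] Matrix (Fin n) (Fin n) ℂ)
    (hCP : IsCompletelyPositive Φ)
    (hTP : ∀ A : Matrix (Fin n) (Fin n) ℂ, (Φ A).trace = A.trace)
    (hUnital : Φ 1 = 1)
    (σ : Matrix (Fin n) (Fin n) ℂ) (hσ : σ.PosSemidef) (hσtr : σ.trace = 1)
    (ρ : Matrix (Fin n) (Fin n) ℂ) (hρdef : ρ = Φ σ) (hρ : ρ.IsHermitian) :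
    -- majorization λ(ρ) ≺ λ(σ): every partial sum of eigenvalues of ρ is
    -- dominated by the sum of equally many eigenvalues of σ, with equal totals
    ((∀ s : Finset (Fin n), ∃ t : Finset (Fin n), t.card = s.card ∧
        ∑ i ∈ s, hρ.eigenvalues i ≤ ∑ i ∈ t, hσ.isHermitian.eigenvalues i) ∧
      ∑ i, hρ.eigenvalues i = ∑ i, hσ.isHermitian.eigenvalues i) ∧
    -- consequently purity does not increase
    ((ρ * ρ).trace).re ≤ ((σ * σ).trace).re :=
  unital_channel_majorizes_general Φ hCP hTP hUnital σ hσ ρ hρdef hρ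
end Channel
end
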